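/- arXiv:1503.01996 — 2 statements merged into one kernel-verified Lean document; each statement's English description precedes it below -/
import Mathlib

section
/- Let c, m be positive integers, let A be a real c×c matrix with nonpositive off-diagonal entries, zero row sums and zero column sums, and let Z be a real m×c matrix. Then for every u : Fin m → ℝ, if Z *ᵥ (A *ᵥ (fun i => Real.exp ((Zᵀ *ᵥ u) i))) = 0 then already A *ᵥ (fun i => Real.exp ((Zᵀ *ᵥ u) i)) = 0. (Every positive equilibrium of the dynamics ẋ = −Z A Exp(Zᵀ Ln x) is complex-balanced.) -/
/-!
With `v = Zᵀ u` and `x = exp ∘ v`, the equilibrium condition gives `v ⬝ᵥ A x = u ⬝ᵥ Z A x = 0`.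
Because `A` has zero row and column sums, `v ⬝ᵥ A x` equals `∑ i j, -A i j · D (v i) (v j)`,
where `D a b = exp a - exp b - exp b (a - b)` is the Bregman divergence of `exp`. Every summand is
nonnegative, so all vanish, and strict convexity of `exp` forces `v i = v j` whenever `A i j ≠ 0`.
Then `(A x) i = exp (v i) · ∑ j, A i j = 0`.
-/

open Matrix Real

noncomputable def expBregman (a b : ℝ) : ℝ := exp a - exp b - exp b * (a - b)

lemma expBregman_eq (a b : ℝ) : expBregman a b = exp b * (exp (a - b) - (a - b) - 1) := by
  rw [expBregman, exp_sub]
  field_simp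
  ring

lemma expBregman_nonneg (a b : ℝ) : 0 ≤ expBregman a b := by
  rw [expBregman_eq]
  have := add_one_le_exp (a - b)
  exact mul_nonneg (exp_pos b).le (by linarith)

lemma expBregman_eq_zero_iff {a b : ℝ} : expBregman a b = 0 ↔ a = b := by
  refine ⟨fun h => ?_, fun h => by simp [h, expBregman]⟩
  by_contra hab
  have := add_one_lt_exp (sub_ne_zero.mpr hab)
  rw [expBregman_eq] at h
  nlinarith [exp_pos b]

section BalancedLaplacian

variable {ι : Type*} [Fintype ι] {A : Matrix ι ι ℝ}

lemma dotProduct_mulVec_exp_eq_sum_expBregman (hrow : ∀ i, ∑ j, A i j = 0)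
    (hcol : ∀ j, ∑ i, A i j = 0) (v : ι → ℝ) :
    v ⬝ᵥ (A *ᵥ fun i => exp (v i)) = ∑ i, ∑ j, -A i j * expBregman (v i) (v j) := by
  have hrow' : ∑ i, ∑ j, A i j * exp (v i) = 0 :=
    Finset.sum_eq_zero fun i _ => by rw [← Finset.sum_mul, hrow, zero_mul]
  have hcol' (f : ι → ℝ) : ∑ i, ∑ j, A i j * f j = 0 := by
    rw [Finset.sum_comm]
    exact Finset.sum_eq_zero fun j _ => by rw [← Finset.sum_mul, hcol, zero_mul]
  have hsplit : ∀ i j, -A i j * expBregman (v i) (v j) =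
      v i * (A i j * exp (v j)) - A i j * exp (v i)
        + A i j * (exp (v j) * (1 - v j)) := by
    intro i j
    rw [expBregman]
    ring
  simp only [hsplit, Finset.sum_sub_distrib, Finset.sum_add_distrib, hrow', hcol',
    ← Finset.mul_sum, dotProduct, mulVec]
  ring

lemma eq_of_ne_zero_of_dotProduct_mulVec_exp_eq_zero (hoff : ∀ i j, i ≠ j → A i j ≤ 0)
    (hrow : ∀ i, ∑ j, A i j = 0) (hcol : ∀ j, ∑ i, A i j = 0) {v : ι → ℝ}
    (h : v ⬝ᵥ (A *ᵥ fun i => exp (v i)) = 0) {i j : ι} (hij : A i j ≠ 0) : v i = v j := by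
  have hterm_nonneg : ∀ i j, 0 ≤ -A i j * expBregman (v i) (v j) := by
    intro i j
    rcases eq_or_ne i j with rfl | hne
    · simp [expBregman_eq_zero_iff.mpr rfl]
    · exact mul_nonneg (neg_nonneg.mpr (hoff i j hne)) (expBregman_nonneg _ _)
  rw [dotProduct_mulVec_exp_eq_sum_expBregman hrow hcol,
    Finset.sum_eq_zero_iff_of_nonneg fun i _ => Finset.sum_nonneg fun j _ => hterm_nonneg i j]
    at h
  have hterm := (Finset.sum_eq_zero_iff_of_nonneg fun j _ => hterm_nonneg i j).mp
    (h i (Finset.mem_univ i)) j (Finset.mem_univ j)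
  exact expBregman_eq_zero_iff.mp ((mul_eq_zero.mp hterm).resolve_left (neg_ne_zero.mpr hij))

lemma mulVec_eq_zero_of_apply_eq_of_ne_zero (hrow : ∀ i, ∑ j, A i j = 0) {x : ι → ℝ}
    (hx : ∀ i j, A i j ≠ 0 → x i = x j) : A *ᵥ x = 0 := by
  funext i
  have hconst : ∀ j, A i j * x j = A i j * x i := fun j => by
    by_cases hij : A i j = 0
    · simp [hij]
    · rw [hx i j hij]
  simp only [mulVec, dotProduct, hconst, ← Finset.sum_mul, hrow, zero_mul, Pi.zero_apply]

end BalancedLaplacian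

theorem equilibrium_is_complex_balanced_general
    (c m : ℕ)
    (A : Matrix (Fin c) (Fin c) ℝ)
    (hoff : ∀ i j, i ≠ j → A i j ≤ 0)
    (hrow : ∀ i, ∑ j, A i j = 0)
    (hcol : ∀ j, ∑ i, A i j = 0)
    (Z : Matrix (Fin m) (Fin c) ℝ) :
    ∀ u : Fin m → ℝ,
      Z *ᵥ (A *ᵥ (fun i => Real.exp ((Zᵀ *ᵥ u) i))) = 0 →
        A *ᵥ (fun i => Real.exp ((Zᵀ *ᵥ u) i)) = 0 := by
  intro u h
  have hdot : (Zᵀ *ᵥ u) ⬝ᵥ (A *ᵥ fun i => exp ((Zᵀ *ᵥ u) i)) = 0 := by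
    nth_rw 1 [mulVec_transpose]
    rw [← dotProduct_mulVec, h, dotProduct_zero]
  refine mulVec_eq_zero_of_apply_eq_of_ne_zero hrow fun i j hij => ?_
  rw [eq_of_ne_zero_of_dotProduct_mulVec_exp_eq_zero hoff hrow hcol hdot hij]

theorem equilibrium_is_complex_balanced
    (c m : ℕ) (hc : 0 < c) (hm : 0 < m)
    (A : Matrix (Fin c) (Fin c) ℝ)
    (hoff : ∀ i j, i ≠ j → A i j ≤ 0)
    (hrow : ∀ i, ∑ j, A i j = 0)
    (hcol : ∀ j, ∑ i, A i j = 0)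
    (Z : Matrix (Fin m) (Fin c) ℝ) :
    ∀ u : Fin m → ℝ,
      Z *ᵥ (A *ᵥ (fun i => Real.exp ((Zᵀ *ᵥ u) i))) = 0 →
        A *ᵥ (fun i => Real.exp ((Zᵀ *ᵥ u) i)) = 0 :=
  equilibrium_is_complex_balanced_general c m A hoff hrow hcol Z
end

section
/- Consider a reversible reaction graph on c vertices (finite edge set E, maps t, h : E → Fin c with t e ≠ h e, positive constants k⁺, k⁻ : E → ℝ, and Laplacian L as below). Let ρ : Fin c → ℝ be strictly positive with the kernel of v ↦ L *ᵥ v equal to the span of ρ. If there exists x : Fin c → ℝ such that Real.log (k⁺ e / k⁻ e) = x (h e) − x (t e) for every edge e (formal balancing), then the matrix L * Matrix.diagonal ρ is symmetric. (Implication (3) ⟹ (1) of Theorem 2.) -/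
/-!
Exponentiating the potential `x` gives a positive vector `π = exp ∘ x` satisfying detailed balance,
`k⁺ e π (t e) = k⁻ e π (h e)`, which is exactly the statement that `L * diagonal π` is symmetric.
Since the columns of `L` sum to zero, symmetry of `L * diagonal π` forces `L π = 0`; so `π` is a
nonzero multiple of `ρ`, and `L * diagonal ρ` is a nonzero multiple of `L * diagonal π`.
-/

open Matrix

/-- The weighted Laplacian matrix of a reversible reaction graph on `c` vertices,
with edge set `E`, tail and head maps `t, h`, and forward and reverse reaction
constants `kp, km`. -/
def reactionLaplacian (c : ℕ) {E : Type*} [Fintype E]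
    (t h : E → Fin c) (kp km : E → ℝ) : Matrix (Fin c) (Fin c) ℝ :=
  fun i j =>
    if i = j then
      (∑ e ∈ Finset.univ.filter (fun e => t e = j), kp e) +
        (∑ e ∈ Finset.univ.filter (fun e => h e = j), km e)
    else
      -((∑ e ∈ Finset.univ.filter (fun e => t e = j ∧ h e = i), kp e) +
        (∑ e ∈ Finset.univ.filter (fun e => t e = i ∧ h e = j), km e))

theorem Matrix.mulVec_eq_zero_of_isSymm_mul_diagonal {n R : Type*} [Fintype n] [DecidableEq n]
    [CommSemiring R] {A : Matrix n n R} {v : n → R} (hsym : (A * diagonal v).IsSymm)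
    (hcol : ∀ j, ∑ i, A i j = 0) : A *ᵥ v = 0 := by
  funext i
  calc (A *ᵥ v) i = ∑ j, (A * diagonal v) j i := by
        simp only [mulVec, dotProduct, ← transpose_apply (A * diagonal v) i, hsym.eq, mul_diagonal]
    _ = 0 := by simp only [mul_diagonal, ← Finset.sum_mul, hcol, zero_mul]

theorem Matrix.IsSymm.mul_diagonal_of_mem_span {n K : Type*} [Fintype n] [DecidableEq n] [Field K]
    {A : Matrix n n K} {v w : n → K} (hsym : (A * diagonal v).IsSymm) (hv : v ≠ 0)
    (hvw : v ∈ Submodule.span K {w}) : (A * diagonal w).IsSymm := by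
  obtain ⟨a, rfl⟩ := Submodule.mem_span_singleton.mp hvw
  have ha : a ≠ 0 := by rintro rfl; exact hv (zero_smul K w)
  have hw : w = a⁻¹ • a • w := (inv_smul_smul₀ ha w).symm
  rw [hw, diagonal_smul, Matrix.mul_smul]
  exact hsym.smul a⁻¹

theorem mul_exp_eq_of_log_div_eq {a b x y : ℝ} (ha : 0 < a) (hb : 0 < b)
    (hlog : Real.log (a / b) = y - x) : a * Real.exp x = b * Real.exp y := by
  rw [← Real.exp_eq_exp, Real.exp_log (div_pos ha hb), Real.exp_sub] at hlog
  rw [div_eq_div_iff hb.ne' (Real.exp_pos x).ne'] at hlog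
  linarith

section reactionLaplacian

variable {c : ℕ} {E : Type*} [Fintype E] {t h : E → Fin c} {kp km : E → ℝ}

theorem reactionLaplacian_mul_diagonal_isSymm {π : Fin c → ℝ}
    (hdb : ∀ e, kp e * π (t e) = km e * π (h e)) :
    (reactionLaplacian c t h kp km * diagonal π).IsSymm := by
  ext i j
  rcases eq_or_ne i j with rfl | hij
  · rfl
  have hdb' : ∀ i j, ∑ e ∈ Finset.univ.filter (fun e => t e = i ∧ h e = j), kp e * π i =
      ∑ e ∈ Finset.univ.filter (fun e => t e = i ∧ h e = j), km e * π j :=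
    fun i j => Finset.sum_congr rfl fun e he => by
      obtain ⟨rfl, rfl⟩ := (Finset.mem_filter.mp he).2
      exact hdb e
  simp only [transpose_apply, mul_diagonal, reactionLaplacian, if_neg hij, if_neg hij.symm,
    neg_mul, add_mul, Finset.sum_mul, hdb' i j, hdb' j i]
  ring

theorem sum_reactionLaplacian_apply_eq_zero (hth : ∀ e, t e ≠ h e) (j : Fin c) :
    ∑ i, reactionLaplacian c t h kp km i j = 0 := by
  set offDiag : Fin c → ℝ := fun i =>
    (∑ e ∈ Finset.univ.filter (fun e => t e = j ∧ h e = i), kp e) +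
      ∑ e ∈ Finset.univ.filter (fun e => t e = i ∧ h e = j), km e
  have hloops : offDiag j = 0 := by
    have hempty : Finset.univ.filter (fun e => t e = j ∧ h e = j) = ∅ :=
      Finset.filter_false_of_mem fun e _ ⟨hte, hhe⟩ => hth e (hte.trans hhe.symm)
    simp only [offDiag, hempty, Finset.sum_empty, add_zero]
  have hentry : ∀ i, reactionLaplacian c t h kp km i j =
      (if i = j then reactionLaplacian c t h kp km j j else 0) - offDiag i := by
    intro i
    rcases eq_or_ne i j with rfl | hij
    · rw [if_pos rfl, hloops, sub_zero]
    · rw [if_neg hij, zero_sub]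
      exact if_neg hij
  have hfiber : ∑ i, offDiag i = reactionLaplacian c t h kp km j j := by
    have hkp := Finset.sum_fiberwise (Finset.univ.filter (t · = j)) h kp
    have hkm := Finset.sum_fiberwise (Finset.univ.filter (h · = j)) t km
    simp only [Finset.filter_filter] at hkp hkm
    simp only [offDiag, Finset.sum_add_distrib, reactionLaplacian, if_true, hkp, ← hkm,
      and_comm]
  rw [Finset.sum_congr rfl fun i _ => hentry i, Finset.sum_sub_distrib, Finset.sum_ite_eq',
    if_pos (Finset.mem_univ j), hfiber, sub_self]

end reactionLaplacian

theorem formally_balanced_implies_symmetric_general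
    (c : ℕ) (hc : 0 < c) (E : Type*) [Fintype E]
    (t h : E → Fin c) (hth : ∀ e, t e ≠ h e)
    (kp km : E → ℝ) (hkp : ∀ e, 0 < kp e) (hkm : ∀ e, 0 < km e)
    (ρ : Fin c → ℝ)
    (hker : LinearMap.ker (reactionLaplacian c t h kp km).mulVecLin =
      Submodule.span ℝ {ρ})
    (hfb : ∃ x : Fin c → ℝ, ∀ e, Real.log (kp e / km e) = x (h e) - x (t e)) :
    (reactionLaplacian c t h kp km * Matrix.diagonal ρ).IsSymm := by
  obtain ⟨x, hx⟩ := hfb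
  set π : Fin c → ℝ := fun i => Real.exp (x i)
  have hsym : (reactionLaplacian c t h kp km * diagonal π).IsSymm :=
    reactionLaplacian_mul_diagonal_isSymm fun e => mul_exp_eq_of_log_div_eq (hkp e) (hkm e) (hx e)
  have hπ : π ∈ Submodule.span ℝ {ρ} := by
    rw [← hker, LinearMap.mem_ker, mulVecLin_apply]
    exact mulVec_eq_zero_of_isSymm_mul_diagonal hsym (sum_reactionLaplacian_apply_eq_zero hth)
  have hπ0 : π ≠ 0 := fun h0 => (Real.exp_pos (x ⟨0, hc⟩)).ne' (congrFun h0 _)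
  exact hsym.mul_diagonal_of_mem_span hπ0 hπ

theorem formally_balanced_implies_symmetric
    (c : ℕ) (hc : 0 < c) (E : Type*) [Fintype E]
    (t h : E → Fin c) (hth : ∀ e, t e ≠ h e)
    (kp km : E → ℝ) (hkp : ∀ e, 0 < kp e) (hkm : ∀ e, 0 < km e)
    (ρ : Fin c → ℝ) (hρ : ∀ i, 0 < ρ i)
    (hker : LinearMap.ker (reactionLaplacian c t h kp km).mulVecLin =
      Submodule.span ℝ {ρ})
    (hfb : ∃ x : Fin c → ℝ, ∀ e, Real.log (kp e / km e) = x (h e) - x (t e)) :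
    (reactionLaplacian c t h kp km * Matrix.diagonal ρ).IsSymm :=
  formally_balanced_implies_symmetric_general c hc E t h hth kp km hkp hkm ρ hker hfb
end
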